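/- Let J ≥ 0 and let {I_j^x}_{j=0}^J and {I_j^y}_{j=0}^J be hierarchical partitions (up to level J) of the unit interval [0,1]. Define B_j = I_j^x ⊗ I_j^y = {I^x × I^y : I^x ∈ I_j^x, I^y ∈ I_j^y} for j = 0,…,J. Then the cut-off system X({B_j}_{j=0}^J) = {φ_0} ∪ ∪_{j=0}^{J−1} ∪_{B∈B_j} Ψ_{j,B} is a tight frame (with frame constant 1) for V_J = span{χ_B : B ∈ B_J} ⊆ L²([0,1]²): for every f ∈ V_J, ‖f‖² = |⟨f, φ_0⟩|² + Σ_{j=0}^{J−1} Σ_{B∈B_j} Σ_{1≤ℓ_1<ℓ_2≤c_B} |⟨f, ψ_{j,B}^{(ℓ_1,ℓ_2)}⟩|². -/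

import Mathlib

open MeasureTheory

/-- A hierarchical partition of the unit interval `[0,1]` up to level `J`: a finite sequence
of finite collections of subintervals of `[0,1]` of positive length with pairwise null
intersections whose union is `[0,1]`, starting with `{[0,1]}`, where every interval at level
`j < J` is the (enumerated) union of its children intervals at level `j+1`. -/
structure IntervalPartitionUpTo (J : ℕ) where
  part : ℕ → Finset (Set ℝ)
  root : part 0 = {Set.Icc (0 : ℝ) 1}
  subinterval : ∀ j ≤ J, ∀ B ∈ part j,
    B ⊆ Set.Icc (0 : ℝ) 1 ∧ B.OrdConnected ∧ MeasurableSet B ∧ 0 < volume B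
  cover : ∀ j ≤ J, ⋃ B ∈ part j, B = Set.Icc (0 : ℝ) 1
  null_inter : ∀ j ≤ J, ∀ B ∈ part j, ∀ B' ∈ part j, B ≠ B' → volume (B ∩ B') = 0
  numChild : ℕ → Set ℝ → ℕ
  child : ℕ → Set ℝ → ℕ → Set ℝ
  one_le_numChild : ∀ j < J, ∀ B ∈ part j, 1 ≤ numChild j B
  child_mem : ∀ j < J, ∀ B ∈ part j, ∀ ℓ < numChild j B, child j B ℓ ∈ part (j + 1)
  child_ne : ∀ j < J, ∀ B ∈ part j, ∀ ℓ₁ < numChild j B, ∀ ℓ₂ < numChild j B,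
    ℓ₁ ≠ ℓ₂ → child j B ℓ₁ ≠ child j B ℓ₂
  child_union : ∀ j < J, ∀ B ∈ part j, B = ⋃ ℓ ∈ Finset.range (numChild j B), child j B ℓ

/-- `γ_C = χ_C / √|C|` on the plane. -/
noncomputable def gammaFn (C : Set (ℝ × ℝ)) : ℝ × ℝ → ℝ :=
  C.indicator fun _ => (Real.sqrt (volume C).toReal)⁻¹

/-- `ψ^{(C,C')} = √(|C'|/|B|) γ_C − √(|C|/|B|) γ_{C'}` for sub-blocks `C, C'` of `B`. -/
noncomputable def psiFn (B C C' : Set (ℝ × ℝ)) : ℝ × ℝ → ℝ :=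
  fun x =>
    Real.sqrt ((volume C').toReal / (volume B).toReal) * gammaFn C x -
      Real.sqrt ((volume C).toReal / (volume B).toReal) * gammaFn C' x

/-- The `ℓ`-th child (in the product enumeration) of the product block `Bx × By` at level
`j`: the product of the `(ℓ / c_y)`-th child of `Bx` and the `(ℓ % c_y)`-th child of `By`. -/
def prodChild {J : ℕ} (Px Py : IntervalPartitionUpTo J) (j : ℕ) (Bx By : Set ℝ) (ℓ : ℕ) :
    Set (ℝ × ℝ) :=
  Px.child j Bx (ℓ / Py.numChild j By) ×ˢ Py.child j By (ℓ % Py.numChild j By)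

/-!
For a block `B` with children `C_ℓ`, put `u_ℓ = √b_ℓ` and `a_ℓ = ⟨f, γ_{C_ℓ}⟩`. Then
`⟨f, ψ^{(ℓ₁,ℓ₂)}⟩ = u_{ℓ₂} a_{ℓ₁} - u_{ℓ₁} a_{ℓ₂}`, `∑ u_ℓ² = 1` and `∑ u_ℓ a_ℓ = ⟨f, γ_B⟩`, so
Lagrange's identity gives `∑_{ℓ₁<ℓ₂} ⟨f, ψ^{(ℓ₁,ℓ₂)}⟩² = ∑_ℓ ⟨f, γ_{C_ℓ}⟩² - ⟨f, γ_B⟩²`.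
The children of the blocks of `B_j` run exactly once through `B_{j+1}`, so the energies
`E_j = ∑_{B ∈ B_j} ⟨f, γ_B⟩²` telescope from `E_0 = ⟨f, φ₀⟩²` to `E_J`, and `E_J = ‖f‖²` by
Parseval, the `γ_B`, `B ∈ B_J`, being an orthonormal basis of `V_J`.
-/

open MeasureTheory Finset
open scoped Function InnerProductSpace

local notation "𝕀²" => SProd.sprod (Set.Icc (0 : ℝ) 1) (Set.Icc (0 : ℝ) 1)

theorem lagrange_identity (n : ℕ) (u a : ℕ → ℝ) :
    ∑ ℓ₂ ∈ range n, ∑ ℓ₁ ∈ range ℓ₂, (u ℓ₂ * a ℓ₁ - u ℓ₁ * a ℓ₂) ^ 2 =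
      (∑ ℓ ∈ range n, u ℓ ^ 2) * (∑ ℓ ∈ range n, a ℓ ^ 2) - (∑ ℓ ∈ range n, u ℓ * a ℓ) ^ 2 := by
  induction n with
  | zero => simp
  | succ n ih =>
    have hlast : ∑ ℓ ∈ range n, (u n * a ℓ - u ℓ * a n) ^ 2 =
        u n ^ 2 * ∑ ℓ ∈ range n, a ℓ ^ 2 + a n ^ 2 * ∑ ℓ ∈ range n, u ℓ ^ 2 -
          2 * (u n * a n) * ∑ ℓ ∈ range n, u ℓ * a ℓ := by
      simp only [mul_sum, ← sum_add_distrib, ← sum_sub_distrib]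
      exact sum_congr rfl fun ℓ _ => by ring
    simp only [sum_range_succ _ n, ih, hlast]
    ring

theorem lagrange_identity_weighted (n : ℕ) (v c : ℕ → ℝ) (hv : ∀ ℓ < n, 0 < v ℓ) :
    ∑ ℓ₂ ∈ range n, ∑ ℓ₁ ∈ range ℓ₂,
        (√(v ℓ₂ / ∑ ℓ ∈ range n, v ℓ) * (c ℓ₁ / √(v ℓ₁)) -
          √(v ℓ₁ / ∑ ℓ ∈ range n, v ℓ) * (c ℓ₂ / √(v ℓ₂))) ^ 2 =
      ∑ ℓ ∈ range n, (c ℓ / √(v ℓ)) ^ 2 -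
        ((∑ ℓ ∈ range n, c ℓ) / √(∑ ℓ ∈ range n, v ℓ)) ^ 2 := by
  rcases Nat.eq_zero_or_pos n with rfl | hn
  · simp
  set V := ∑ ℓ ∈ range n, v ℓ
  have hV : 0 < V := sum_pos (fun ℓ hℓ => hv ℓ (mem_range.mp hℓ)) (nonempty_range_iff.mpr hn.ne')
  have hu : ∑ ℓ ∈ range n, √(v ℓ / V) ^ 2 = 1 := by
    rw [sum_congr rfl fun ℓ hℓ => Real.sq_sqrt (div_pos (hv ℓ (mem_range.mp hℓ)) hV).le,
      ← sum_div, div_self hV.ne']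
  have hua : ∑ ℓ ∈ range n, √(v ℓ / V) * (c ℓ / √(v ℓ)) = (∑ ℓ ∈ range n, c ℓ) / √V := by
    rw [sum_div]
    refine sum_congr rfl fun ℓ hℓ => ?_
    have hvℓ := (Real.sqrt_pos.mpr (hv ℓ (mem_range.mp hℓ))).ne'
    rw [Real.sqrt_div' _ hV.le]
    field_simp
  rw [lagrange_identity, hu, hua, one_mul]

theorem Nat.divMod_injective (n : ℕ) : Function.Injective fun ℓ : ℕ => (ℓ / n, ℓ % n) :=
  fun ℓ ℓ' h => by
    simp only [Prod.mk.injEq] at h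
    rw [← Nat.div_add_mod ℓ n, ← Nat.div_add_mod ℓ' n, h.1, h.2]

theorem image_divMod_range_mul (m n : ℕ) :
    (range (m * n)).image (fun ℓ => (ℓ / n, ℓ % n)) = range m ×ˢ range n := by
  ext ⟨i, k⟩
  simp only [mem_image, mem_range, mem_product, Prod.mk.injEq]
  constructor
  · rintro ⟨ℓ, hℓ, rfl, rfl⟩
    have hn : 0 < n := Nat.pos_of_ne_zero fun h => by simp [h] at hℓ
    exact ⟨(Nat.div_lt_iff_lt_mul hn).mpr hℓ, Nat.mod_lt _ hn⟩
  · rintro ⟨hi, hk⟩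
    refine ⟨i * n + k, ?_, ?_, ?_⟩
    · nlinarith
    · rw [Nat.add_comm, Nat.add_mul_div_right _ _ (by omega), Nat.div_eq_of_lt hk, zero_add]
    · rw [Nat.add_comm, Nat.add_mul_mod_self_right, Nat.mod_eq_of_lt hk]

section AEPartition

variable {α β ι κ : Type*} [MeasurableSpace α] [MeasurableSpace β]

structure IsAEPartition (μ : Measure α) (t : Finset ι) (C : ι → Set α) (B : Set α) : Prop where
  biUnion_eq : ⋃ i ∈ t, C i = B
  measurableSet : ∀ i ∈ t, MeasurableSet (C i)
  pairwise_aedisjoint : (t : Set ι).Pairwise (AEDisjoint μ on C)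

theorem Set.Pairwise.aedisjoint_prod {μ : Measure α} {ν : Measure β} [SFinite ν]
    {s : Finset ι} {t : Finset κ} {X : ι → Set α} {Y : κ → Set β}
    (hX : (s : Set ι).Pairwise (AEDisjoint μ on X))
    (hY : (t : Set κ).Pairwise (AEDisjoint ν on Y)) :
    ((s ×ˢ t : Finset (ι × κ)) : Set (ι × κ)).Pairwise
      (AEDisjoint (μ.prod ν) on fun p => X p.1 ×ˢ Y p.2) := by
  rintro ⟨i, k⟩ hik ⟨i', k'⟩ hik' hne
  simp only [coe_product, Set.mem_prod, mem_coe] at hik hik'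
  change μ.prod ν ((X i ×ˢ Y k) ∩ (X i' ×ˢ Y k')) = 0
  rw [Set.prod_inter_prod, Measure.prod_prod]
  by_cases hi : i = i'
  · subst hi
    rw [hY hik.2 hik'.2 fun hk => hne (by rw [hk]), mul_zero]
  · rw [hX hik.1 hik'.1 hi, zero_mul]

namespace IsAEPartition

variable {μ : Measure α} {t : Finset ι} {C : ι → Set α} {B : Set α}

theorem subset (h : IsAEPartition μ t C B) {i : ι} (hi : i ∈ t) : C i ⊆ B :=
  h.biUnion_eq ▸ Set.subset_biUnion_of_mem (u := C) (Finset.mem_coe.mpr hi)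

theorem measurableSet_biUnion (h : IsAEPartition μ t C B) : MeasurableSet B :=
  h.biUnion_eq ▸ Finset.measurableSet_biUnion t h.measurableSet

theorem sum_measure (h : IsAEPartition μ t C B) : ∑ i ∈ t, μ (C i) = μ B := by
  rw [← h.biUnion_eq,
    measure_biUnion_finset₀ h.pairwise_aedisjoint fun i hi =>
      (h.measurableSet i hi).nullMeasurableSet]

theorem sum_setIntegral {E : Type*} [NormedAddCommGroup E] [NormedSpace ℝ E] {f : α → E}
    (h : IsAEPartition μ t C B) (hf : IntegrableOn f B μ) :
    ∑ i ∈ t, ∫ x in C i, f x ∂μ = ∫ x in B, f x ∂μ := by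
  have hU : ⋃ i : (t : Set ι), C i = B := by
    rw [Set.iUnion_subtype, set_biUnion_coe, h.biUnion_eq]
  rw [← hU, integral_iUnion_ae _ (h.pairwise_aedisjoint.subtype _ _) (hU ▸ hf), tsum_fintype]
  · exact (sum_coe_sort t _).symm
  · exact fun i => (h.measurableSet i i.2).nullMeasurableSet

theorem of_absolutelyContinuous {ν : Measure α} (h : IsAEPartition μ t C B) (hνμ : ν ≪ μ) :
    IsAEPartition ν t C B :=
  ⟨h.biUnion_eq, h.measurableSet, h.pairwise_aedisjoint.mono' fun _ _ hij => hνμ hij⟩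

theorem comp_of_image [DecidableEq ι] {s : Finset κ} {g : κ → ι}
    (h : IsAEPartition μ (s.image g) C B) (hg : Set.InjOn g s) : IsAEPartition μ s (C ∘ g) B where
  biUnion_eq := by rw [← h.biUnion_eq, Finset.set_biUnion_finset_image]; rfl
  measurableSet i hi := h.measurableSet (g i) (mem_image_of_mem g hi)
  pairwise_aedisjoint _ hi _ hi' hne :=
    h.pairwise_aedisjoint (mem_image_of_mem g hi) (mem_image_of_mem g hi') (hg.ne hi hi' hne)

theorem prod {ν : Measure β} [SFinite ν] {s : Finset ι} {t : Finset κ} {X : ι → Set α}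
    {Y : κ → Set β} {A : Set α} {A' : Set β}
    (hX : IsAEPartition μ s X A) (hY : IsAEPartition ν t Y A') :
    IsAEPartition (μ.prod ν) (s ×ˢ t) (fun p => X p.1 ×ˢ Y p.2) (A ×ˢ A') where
  biUnion_eq := by
    ext ⟨x, y⟩
    simp only [← hX.biUnion_eq, ← hY.biUnion_eq, Set.mem_iUnion, Set.mem_prod, mem_product,
      exists_prop, Prod.exists]
    tauto
  measurableSet p hp :=
    (hX.measurableSet _ (mem_product.mp hp).1).prod (hY.measurableSet _ (mem_product.mp hp).2)
  pairwise_aedisjoint := hX.pairwise_aedisjoint.aedisjoint_prod hY.pairwise_aedisjoint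

end IsAEPartition

end AEPartition

section Parseval

variable {α ι : Type*} [MeasurableSpace α] {μ : Measure α}

/-- The normalized indicators `χ_{s i} / √(μ (s i))` are an orthonormal basis of the span. -/
theorem norm_sq_eq_sum_sq_setIntegral_div_of_mem_span (t : Finset ι) {s : ι → Set α}
    (hs : ∀ i ∈ t, MeasurableSet (s i)) (hpos : ∀ i ∈ t, 0 < μ (s i))
    (hfin : ∀ i ∈ t, μ (s i) ≠ ⊤) (hd : (t : Set ι).Pairwise (AEDisjoint μ on s))
    {f : Lp ℝ 2 μ}
    (hf : f ∈ Submodule.span ℝ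
      {g : Lp ℝ 2 μ | ∃ i ∈ t, (g : α → ℝ) =ᵐ[μ] (s i).indicator fun _ => (1 : ℝ)}) :
    ‖f‖ ^ 2 = ∑ i ∈ t, (∫ x in s i, f x ∂μ) ^ 2 / μ.real (s i) := by
  classical
  let e : t → Lp ℝ 2 μ := fun i =>
    (√(μ.real (s i)))⁻¹ • indicatorConstLp 2 (hs i i.2) (hfin i i.2) (1 : ℝ)
  have hreal (i : t) : 0 < μ.real (s i) := ENNReal.toReal_pos (hpos i i.2).ne' (hfin i i.2)
  have hsqrt (i : t) : √(μ.real (s i)) ≠ 0 := (Real.sqrt_pos.mpr (hreal i)).ne'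
  have he : Orthonormal ℝ e := by
    rw [orthonormal_iff_ite]
    intro i i'
    simp only [e, real_inner_smul_left, real_inner_smul_right,
      L2.real_inner_indicatorConstLp_one_indicatorConstLp_one]
    split_ifs with h
    · subst h
      rw [Set.inter_self, ← mul_assoc, ← mul_inv, Real.mul_self_sqrt (hreal i).le,
        inv_mul_cancel₀ (hreal i).ne']
    · have h0 : μ (s i ∩ s i') = 0 := hd i.2 i'.2 (Subtype.coe_injective.ne h)
      simp [Measure.real, h0]
  have hspan : f ∈ Submodule.span ℝ (Set.range e) := by
    refine Submodule.span_le.mpr ?_ hf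
    rintro g ⟨i, hi, hg⟩
    have hg' : g = indicatorConstLp 2 (hs i hi) (hfin i hi) (1 : ℝ) :=
      Lp.ext (hg.trans indicatorConstLp_coeFn.symm)
    have : g = √(μ.real (s i)) • e ⟨i, hi⟩ := by
      rw [smul_smul, mul_inv_cancel₀ (hsqrt ⟨i, hi⟩), one_smul, hg']
    rw [this]
    exact Submodule.smul_mem _ _ (Submodule.subset_span ⟨⟨i, hi⟩, rfl⟩)
  have hcoef (i : t) : ⟪e i, f⟫_ℝ = (√(μ.real (s i)))⁻¹ * ∫ x in s i, f x ∂μ := by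
    simp only [e, real_inner_smul_left, L2.inner_indicatorConstLp_one]
  obtain ⟨c, hc⟩ := (Submodule.mem_span_range_iff_exists_fun ℝ).mp hspan
  have hinner (i : t) : ⟪e i, f⟫_ℝ = c i := by rw [← hc, he.inner_right_fintype]
  calc ‖f‖ ^ 2 = ⟪f, f⟫_ℝ := (real_inner_self_eq_norm_sq f).symm
    _ = ∑ i : t, ⟪e i, f⟫_ℝ ^ 2 := by
      nth_rewrite 1 [← hc]
      simp only [sum_inner, real_inner_smul_left, hinner, sq]
    _ = ∑ i ∈ t, (∫ x in s i, f x ∂μ) ^ 2 / μ.real (s i) := by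
      rw [← sum_coe_sort t]
      refine sum_congr rfl fun i _ => ?_
      rw [hcoef, mul_pow, inv_pow, Real.sq_sqrt (hreal i).le, inv_mul_eq_div]

end Parseval

namespace IntervalPartitionUpTo

variable {J : ℕ} (P : IntervalPartitionUpTo J) {j : ℕ} {B : Set ℝ}

theorem measurableSet_of_mem (hj : j ≤ J) (hB : B ∈ P.part j) : MeasurableSet B :=
  (P.subinterval j hj B hB).2.2.1

theorem volume_pos_of_mem (hj : j ≤ J) (hB : B ∈ P.part j) : 0 < volume B :=
  (P.subinterval j hj B hB).2.2.2

theorem subset_Icc_of_mem (hj : j ≤ J) (hB : B ∈ P.part j) : B ⊆ Set.Icc 0 1 :=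
  (P.subinterval j hj B hB).1

theorem pairwise_aedisjoint (hj : j ≤ J) :
    (P.part j : Set (Set ℝ)).Pairwise (AEDisjoint volume on id) :=
  fun B hB B' hB' hne => P.null_inter j hj B hB B' hB' hne

theorem isAEPartition_child (hj : j < J) (hB : B ∈ P.part j) :
    IsAEPartition volume (range (P.numChild j B)) (P.child j B) B where
  biUnion_eq := (P.child_union j hj B hB).symm
  measurableSet i hi := P.measurableSet_of_mem hj (P.child_mem j hj B hB i (mem_range.mp hi))
  pairwise_aedisjoint i hi i' hi' hne :=
    P.null_inter (j + 1) hj _ (P.child_mem j hj B hB i (mem_range.mp hi))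
      _ (P.child_mem j hj B hB i' (mem_range.mp hi'))
      (P.child_ne j hj B hB i (mem_range.mp hi) i' (mem_range.mp hi') hne)

/-- A child has positive measure, so it lies in a unique parent. -/
theorem eq_of_child_eq (hj : j < J) {B₁ B₂ : Set ℝ} (hB₁ : B₁ ∈ P.part j) (hB₂ : B₂ ∈ P.part j)
    {i₁ i₂ : ℕ} (hi₁ : i₁ < P.numChild j B₁) (hi₂ : i₂ < P.numChild j B₂)
    (h : P.child j B₁ i₁ = P.child j B₂ i₂) : B₁ = B₂ ∧ i₁ = i₂ := by
  have hB : B₁ = B₂ := by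
    by_contra hne
    have hsub : P.child j B₁ i₁ ⊆ B₁ ∩ B₂ :=
      Set.subset_inter ((P.isAEPartition_child hj hB₁).subset (mem_range.mpr hi₁))
        (h ▸ (P.isAEPartition_child hj hB₂).subset (mem_range.mpr hi₂))
    exact (P.volume_pos_of_mem hj (P.child_mem j hj B₁ hB₁ i₁ hi₁)).ne'
      (measure_mono_null hsub (P.null_inter j hj.le B₁ hB₁ B₂ hB₂ hne))
  subst hB
  exact ⟨rfl, by_contra fun hne => P.child_ne j hj B₁ hB₁ i₁ hi₁ i₂ hi₂ hne h⟩

/-- An interval of positive measure at level `j + 1` cannot be a.e. disjoint from all the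
children of level-`j` intervals, since these cover `[0,1]`. -/
theorem exists_child_eq (hj : j < J) {B' : Set ℝ} (hB' : B' ∈ P.part (j + 1)) :
    ∃ B ∈ P.part j, ∃ i < P.numChild j B, P.child j B i = B' := by
  by_contra! hne
  have hcover : B' ⊆ ⋃ B ∈ P.part j, ⋃ i ∈ range (P.numChild j B), B' ∩ P.child j B i := by
    intro x hx
    have hx' : x ∈ ⋃ B ∈ P.part j, B := P.cover j hj.le ▸ P.subset_Icc_of_mem hj hB' hx
    obtain ⟨B, hB, hxB⟩ := Set.mem_iUnion₂.mp hx'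
    rw [P.child_union j hj B hB] at hxB
    obtain ⟨i, hi, hxi⟩ := Set.mem_iUnion₂.mp hxB
    exact Set.mem_iUnion₂.mpr ⟨B, hB, Set.mem_iUnion₂.mpr ⟨i, hi, hx, hxi⟩⟩
  refine (P.volume_pos_of_mem hj hB').ne' (measure_mono_null hcover ?_)
  refine (measure_biUnion_null_iff (P.part j).countable_toSet).mpr fun B hB => ?_
  refine (measure_biUnion_null_iff (range _).countable_toSet).mpr fun i hi => ?_
  have hi' := mem_range.mp hi
  exact P.null_inter (j + 1) hj B' hB' _ (P.child_mem j hj B hB i hi')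
    (hne B hB i hi').symm

theorem sum_sum_child {M : Type*} [AddCommMonoid M] (hj : j < J) (g : Set ℝ → M) :
    ∑ B ∈ P.part j, ∑ i ∈ range (P.numChild j B), g (P.child j B i) =
      ∑ B' ∈ P.part (j + 1), g B' := by
  rw [← sum_sigma (P.part j) (fun B => range (P.numChild j B)) fun p => g (P.child j p.1 p.2)]
  refine sum_bij (fun p _ => P.child j p.1 p.2) ?_ ?_ ?_ fun _ _ => rfl
  · rintro ⟨B, i⟩ hp
    obtain ⟨hB, hi⟩ := mem_sigma.mp hp
    exact P.child_mem j hj B hB i (mem_range.mp hi)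
  · rintro ⟨B₁, i₁⟩ hp₁ ⟨B₂, i₂⟩ hp₂ h
    obtain ⟨hB₁, hi₁⟩ := mem_sigma.mp hp₁
    obtain ⟨hB₂, hi₂⟩ := mem_sigma.mp hp₂
    obtain ⟨rfl, rfl⟩ :=
      P.eq_of_child_eq hj hB₁ hB₂ (mem_range.mp hi₁) (mem_range.mp hi₂) h
    rfl
  · intro B' hB'
    obtain ⟨B, hB, i, hi, rfl⟩ := P.exists_child_eq hj hB'
    exact ⟨⟨B, i⟩, mem_sigma.mpr ⟨hB, mem_range.mpr hi⟩, rfl⟩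

end IntervalPartitionUpTo

theorem volume_unitSquare : volume 𝕀² = 1 := by
  rw [Measure.volume_eq_prod, Measure.prod_prod, Real.volume_Icc, sub_zero, ENNReal.ofReal_one,
    one_mul]

section ProductBlocks

variable {J : ℕ} (Px Py : IntervalPartitionUpTo J) {j : ℕ} {Bx By : Set ℝ}

theorem block_subset_unitSquare (hj : j ≤ J) (hBx : Bx ∈ Px.part j) (hBy : By ∈ Py.part j) :
    Bx ×ˢ By ⊆ 𝕀² :=
  Set.prod_mono (Px.subset_Icc_of_mem hj hBx) (Py.subset_Icc_of_mem hj hBy)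

theorem volume_block_ne_top (hj : j ≤ J) (hBx : Bx ∈ Px.part j) (hBy : By ∈ Py.part j) :
    volume (Bx ×ˢ By) ≠ ⊤ :=
  measure_ne_top_of_subset (block_subset_unitSquare Px Py hj hBx hBy)
    (volume_unitSquare ▸ ENNReal.one_ne_top)

theorem volume_block_pos (hj : j ≤ J) (hBx : Bx ∈ Px.part j) (hBy : By ∈ Py.part j) :
    0 < volume (Bx ×ˢ By) := by
  rw [Measure.volume_eq_prod, Measure.prod_prod]
  exact ENNReal.mul_pos (Px.volume_pos_of_mem hj hBx).ne' (Py.volume_pos_of_mem hj hBy).ne'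

theorem isAEPartition_prodChild (hj : j < J) (hBx : Bx ∈ Px.part j) (hBy : By ∈ Py.part j) :
    IsAEPartition volume (range (Px.numChild j Bx * Py.numChild j By))
      (prodChild Px Py j Bx By) (Bx ×ˢ By) := by
  have h := (Px.isAEPartition_child hj hBx).prod (Py.isAEPartition_child hj hBy)
  rw [← Measure.volume_eq_prod, ← image_divMod_range_mul] at h
  exact h.comp_of_image (Nat.divMod_injective _).injOn

theorem exists_prodChild_eq (hj : j < J) (hBx : Bx ∈ Px.part j) (hBy : By ∈ Py.part j) {ℓ : ℕ}
    (hℓ : ℓ ∈ range (Px.numChild j Bx * Py.numChild j By)) :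
    ∃ Bx' ∈ Px.part (j + 1), ∃ By' ∈ Py.part (j + 1), prodChild Px Py j Bx By ℓ = Bx' ×ˢ By' := by
  have h := mem_image_of_mem (fun ℓ => (ℓ / Py.numChild j By, ℓ % Py.numChild j By)) hℓ
  rw [image_divMod_range_mul, mem_product, mem_range, mem_range] at h
  exact ⟨_, Px.child_mem j hj Bx hBx _ h.1, _, Py.child_mem j hj By hBy _ h.2, rfl⟩

theorem sum_sum_prodChild {M : Type*} [AddCommMonoid M] (hj : j < J) (g : Set (ℝ × ℝ) → M) :
    ∑ Bx ∈ Px.part j, ∑ By ∈ Py.part j,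
        ∑ ℓ ∈ range (Px.numChild j Bx * Py.numChild j By), g (prodChild Px Py j Bx By ℓ) =
      ∑ Bx' ∈ Px.part (j + 1), ∑ By' ∈ Py.part (j + 1), g (Bx' ×ˢ By') := by
  simp only [← Px.sum_sum_child hj, ← Py.sum_sum_child hj]
  refine sum_congr rfl fun Bx _ => ?_
  rw [sum_comm]
  refine sum_congr rfl fun By _ => ?_
  rw [← sum_product', ← image_divMod_range_mul,
    sum_image fun ℓ _ ℓ' _ h => Nat.divMod_injective _ h]
  rfl

end ProductBlocks

section Coefficients

variable {μ : Measure (ℝ × ℝ)} {f : ℝ × ℝ → ℝ} {C C' : Set (ℝ × ℝ)}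

theorem mul_gammaFn_eq_indicator (f : ℝ × ℝ → ℝ) (C : Set (ℝ × ℝ)) :
    (fun x => f x * gammaFn C x) = C.indicator fun x => f x * (√(volume C).toReal)⁻¹ := by
  ext x
  exact (Set.indicator_mul_right C f _).symm

theorem integrable_mul_gammaFn (hC : MeasurableSet C) (hf : IntegrableOn f C μ) :
    Integrable (fun x => f x * gammaFn C x) μ := by
  rw [mul_gammaFn_eq_indicator, integrable_indicator_iff hC]
  exact hf.mul_const _

theorem integral_mul_gammaFn (f : ℝ × ℝ → ℝ) (hC : MeasurableSet C) :
    ∫ x, f x * gammaFn C x ∂μ = (∫ x in C, f x ∂μ) / √(volume C).toReal := by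
  rw [mul_gammaFn_eq_indicator, integral_indicator hC, integral_mul_const, div_eq_mul_inv]

theorem integral_mul_psiFn (B : Set (ℝ × ℝ)) (hC : MeasurableSet C) (hC' : MeasurableSet C')
    (hf : IntegrableOn f C μ) (hf' : IntegrableOn f C' μ) :
    ∫ x, f x * psiFn B C C' x ∂μ =
      √((volume C').toReal / (volume B).toReal) * ((∫ x in C, f x ∂μ) / √(volume C).toReal) -
        √((volume C).toReal / (volume B).toReal) *
          ((∫ x in C', f x ∂μ) / √(volume C').toReal) := by
  simp only [psiFn, mul_sub, mul_left_comm (f _)]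
  rw [integral_sub ((integrable_mul_gammaFn hC hf).const_mul _)
      ((integrable_mul_gammaFn hC' hf').const_mul _),
    integral_const_mul, integral_const_mul, integral_mul_gammaFn f hC, integral_mul_gammaFn f hC']

theorem sum_sq_integral_mul_gammaFn_eq_add {n : ℕ} {B : Set (ℝ × ℝ)} {C : ℕ → Set (ℝ × ℝ)}
    (hμ : μ ≪ volume) (hC : IsAEPartition volume (range n) C B)
    (hpos : ∀ ℓ ∈ range n, 0 < volume (C ℓ)) (hB : volume B ≠ ⊤) (hf : IntegrableOn f B μ) :
    ∑ ℓ ∈ range n, (∫ x, f x * gammaFn (C ℓ) x ∂μ) ^ 2 =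
      (∫ x, f x * gammaFn B x ∂μ) ^ 2 +
        ∑ ℓ₂ ∈ range n, ∑ ℓ₁ ∈ range ℓ₂, (∫ x, f x * psiFn B (C ℓ₁) (C ℓ₂) x ∂μ) ^ 2 := by
  have hfin (ℓ) (hℓ : ℓ ∈ range n) : volume (C ℓ) ≠ ⊤ := measure_ne_top_of_subset (hC.subset hℓ) hB
  have hvol : (volume B).toReal = ∑ ℓ ∈ range n, (volume (C ℓ)).toReal := by
    rw [← hC.sum_measure, ENNReal.toReal_sum hfin]
  have hint : ∫ x in B, f x ∂μ = ∑ ℓ ∈ range n, ∫ x in C ℓ, f x ∂μ :=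
    ((hC.of_absolutelyContinuous hμ).sum_setIntegral hf).symm
  have hψ (ℓ₂) (h₂ : ℓ₂ ∈ range n) (ℓ₁) (h₁ : ℓ₁ ∈ range ℓ₂) :
      ∫ x, f x * psiFn B (C ℓ₁) (C ℓ₂) x ∂μ = _ :=
    have h₁' : ℓ₁ ∈ range n := mem_range.mpr ((mem_range.mp h₁).trans (mem_range.mp h₂))
    integral_mul_psiFn B (hC.measurableSet _ h₁') (hC.measurableSet _ h₂)
      (hf.mono_set (hC.subset h₁')) (hf.mono_set (hC.subset h₂))
  rw [sum_congr rfl fun ℓ₂ h₂ => sum_congr rfl fun ℓ₁ h₁ => by rw [hψ ℓ₂ h₂ ℓ₁ h₁],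
    sum_congr rfl fun ℓ hℓ => by rw [integral_mul_gammaFn f (hC.measurableSet ℓ hℓ)],
    integral_mul_gammaFn f hC.measurableSet_biUnion, hvol, hint,
    lagrange_identity_weighted n _ _ fun ℓ hℓ =>
      ENNReal.toReal_pos (hpos ℓ (mem_range.mpr hℓ)).ne' (hfin ℓ (mem_range.mpr hℓ))]
  ring

end Coefficients

section LevelEnergy

variable {J : ℕ} (Px Py : IntervalPartitionUpTo J)

noncomputable def levelEnergy (μ : Measure (ℝ × ℝ)) (f : ℝ × ℝ → ℝ) (j : ℕ) : ℝ :=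
  ∑ Bx ∈ Px.part j, ∑ By ∈ Py.part j, (∫ x, f x * gammaFn (Bx ×ˢ By) x ∂μ) ^ 2

theorem levelEnergy_zero (μ : Measure (ℝ × ℝ)) (f : ℝ × ℝ → ℝ) :
    levelEnergy Px Py μ f 0 =
      (∫ x, f x * 𝕀².indicator (fun _ => (1 : ℝ)) x ∂μ) ^ 2 := by
  rw [levelEnergy, Px.root, Py.root, sum_singleton, sum_singleton, gammaFn, volume_unitSquare,
    ENNReal.toReal_one, Real.sqrt_one, inv_one]

theorem levelEnergy_succ_sub {μ : Measure (ℝ × ℝ)} {f : ℝ × ℝ → ℝ} (hμ : μ ≪ volume)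
    (hf : IntegrableOn f 𝕀² μ) {j : ℕ} (hj : j < J) :
    levelEnergy Px Py μ f (j + 1) - levelEnergy Px Py μ f j =
      ∑ Bx ∈ Px.part j, ∑ By ∈ Py.part j,
        ∑ ℓ₂ ∈ range (Px.numChild j Bx * Py.numChild j By), ∑ ℓ₁ ∈ range ℓ₂,
          (∫ x, f x * psiFn (Bx ×ˢ By) (prodChild Px Py j Bx By ℓ₁)
            (prodChild Px Py j Bx By ℓ₂) x ∂μ) ^ 2 := by
  rw [levelEnergy, levelEnergy,
    ← sum_sum_prodChild Px Py hj fun B => (∫ x, f x * gammaFn B x ∂μ) ^ 2, ← sum_sub_distrib]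
  refine sum_congr rfl fun Bx hBx => ?_
  rw [← sum_sub_distrib]
  refine sum_congr rfl fun By hBy => ?_
  have hpos (ℓ) (hℓ : ℓ ∈ range (Px.numChild j Bx * Py.numChild j By)) :
      0 < volume (prodChild Px Py j Bx By ℓ) := by
    obtain ⟨Bx', hBx', By', hBy', h⟩ := exists_prodChild_eq Px Py hj hBx hBy hℓ
    exact h ▸ volume_block_pos Px Py hj hBx' hBy'
  rw [sum_sq_integral_mul_gammaFn_eq_add hμ (isAEPartition_prodChild Px Py hj hBx hBy) hpos
    (volume_block_ne_top Px Py hj.le hBx hBy)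
    (hf.mono_set (block_subset_unitSquare Px Py hj.le hBx hBy))]
  ring

theorem norm_sq_eq_levelEnergy
    (f : Lp ℝ 2 (volume.restrict 𝕀²))
    (hf : f ∈ Submodule.span ℝ
      {g : Lp ℝ 2 (volume.restrict 𝕀²) |
        ∃ Bx ∈ Px.part J, ∃ By ∈ Py.part J,
          (g : ℝ × ℝ → ℝ) =ᵐ[volume.restrict 𝕀²]
            (Bx ×ˢ By).indicator fun _ => (1 : ℝ)}) :
    ‖f‖ ^ 2 = levelEnergy Px Py (volume.restrict 𝕀²) f J := by
  have hrestrict {p : Set ℝ × Set ℝ} (hp : p ∈ Px.part J ×ˢ Py.part J) :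
      volume.restrict 𝕀² (p.1 ×ˢ p.2) = volume (p.1 ×ˢ p.2) :=
    Measure.restrict_eq_self _
      (block_subset_unitSquare Px Py le_rfl (mem_product.mp hp).1 (mem_product.mp hp).2)
  have hd := (Px.pairwise_aedisjoint le_rfl).aedisjoint_prod (Py.pairwise_aedisjoint le_rfl)
  rw [← Measure.volume_eq_prod] at hd
  rw [norm_sq_eq_sum_sq_setIntegral_div_of_mem_span (Px.part J ×ˢ Py.part J)
      (fun p hp => (Px.measurableSet_of_mem le_rfl (mem_product.mp hp).1).prod
        (Py.measurableSet_of_mem le_rfl (mem_product.mp hp).2))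
      (fun p hp => hrestrict hp ▸
        volume_block_pos Px Py le_rfl (mem_product.mp hp).1 (mem_product.mp hp).2)
      (fun p hp => hrestrict hp ▸
        volume_block_ne_top Px Py le_rfl (mem_product.mp hp).1 (mem_product.mp hp).2)
      (hd.mono' fun _ _ h => Measure.absolutelyContinuous_of_le Measure.restrict_le_self h)
      (by simpa only [Prod.exists, mem_product, and_assoc, exists_and_left] using hf),
    sum_product, levelEnergy]
  refine sum_congr rfl fun Bx hBx => sum_congr rfl fun By hBy => ?_
  rw [integral_mul_gammaFn _ ((Px.measurableSet_of_mem le_rfl hBx).prod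
      (Py.measurableSet_of_mem le_rfl hBy)), div_pow,
    Real.sq_sqrt ENNReal.toReal_nonneg, Measure.real, hrestrict (mem_product.mpr ⟨hBx, hBy⟩)]

end LevelEnergy

/-- given hierarchical partitions `{I_j^x}` and `{I_j^y}` of `[0,1]` up to
level `J`, with `B_j = I_j^x ⊗ I_j^y` the collections of product blocks, the cut-off system
`X({B_j}_{j=0}^J) = {φ₀} ∪ ⋃_{j<J} ⋃_{B∈B_j} Ψ_{j,B}` is a tight frame with frame constant 1
for `V_J = span{χ_B : B ∈ B_J} ⊆ L²([0,1]²)`. -/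
theorem product_cutoff_system_tight_frame
    {J : ℕ} (Px Py : IntervalPartitionUpTo J)
    (f : Lp ℝ 2 (volume.restrict (Set.Icc (0 : ℝ) 1 ×ˢ Set.Icc (0 : ℝ) 1)))
    (hf : f ∈ Submodule.span ℝ
      {g : Lp ℝ 2 (volume.restrict (Set.Icc (0 : ℝ) 1 ×ˢ Set.Icc (0 : ℝ) 1)) |
        ∃ Bx ∈ Px.part J, ∃ By ∈ Py.part J,
          (g : ℝ × ℝ → ℝ) =ᵐ[volume.restrict (Set.Icc (0 : ℝ) 1 ×ˢ Set.Icc (0 : ℝ) 1)]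
            (Bx ×ˢ By).indicator fun _ => (1 : ℝ)}) :
    ‖f‖ ^ 2 =
      (∫ x, f x * (Set.Icc (0 : ℝ) 1 ×ˢ Set.Icc (0 : ℝ) 1).indicator (fun _ => (1 : ℝ)) x
          ∂(volume.restrict (Set.Icc (0 : ℝ) 1 ×ˢ Set.Icc (0 : ℝ) 1))) ^ 2 +
        ∑ j ∈ Finset.range J, ∑ Bx ∈ Px.part j, ∑ By ∈ Py.part j,
          ∑ ℓ₂ ∈ Finset.range (Px.numChild j Bx * Py.numChild j By), ∑ ℓ₁ ∈ Finset.range ℓ₂,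
            (∫ x, f x * psiFn (Bx ×ˢ By) (prodChild Px Py j Bx By ℓ₁) (prodChild Px Py j Bx By ℓ₂) x
              ∂(volume.restrict (Set.Icc (0 : ℝ) 1 ×ˢ Set.Icc (0 : ℝ) 1))) ^ 2 := by
  have hf_int : IntegrableOn f 𝕀² (volume.restrict 𝕀²) :=
    integrableOn_Lp_of_measure_ne_top f one_le_two
      (by rw [Measure.restrict_apply_self, volume_unitSquare]; exact ENNReal.one_ne_top)
  have htelescope := sum_range_sub (levelEnergy Px Py (volume.restrict 𝕀²) f) J
  rw [sum_congr rfl fun j hj => levelEnergy_succ_sub Px Py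
    (Measure.absolutelyContinuous_of_le Measure.restrict_le_self) hf_int (mem_range.mp hj)]
    at htelescope
  rw [norm_sq_eq_levelEnergy Px Py f hf, ← levelEnergy_zero Px Py, htelescope]
  ring
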